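/- Let n > t ≥ 0 and suppose a_1,…,a_m, b_1,…,b_m ∈ {0,1}^n satisfy dist(a_i,b_i) = t + s_i for integers s_i ≥ 1 for all i ∈ [m], and dist(a_i,b_j) + dist(a_j,b_i) ≤ 2t for all distinct i,j ∈ [m]. Then sum over i of V_{t+s_i, s_i}/2^{t+s_i} is at most 1, where V_{N,d} = sum_{i=0}^{(d-1)/2} C(N,i) if d is odd and V_{N,d} = sum_{i=0}^{d/2−1} C(N,i) + C(N−1, d/2−1) if d is even. -/

import Mathlib

/-- `V N d` from the paper: size of a Hamming-ball-like region. -/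
def V (N d : ℕ) : ℕ :=
  if d % 2 = 1 then ∑ i ∈ Finset.range ((d - 1) / 2 + 1), N.choose i
  else (∑ i ∈ Finset.range (d / 2), N.choose i) + (N - 1).choose (d / 2 - 1)

open Finset in
lemma countFix {n : ℕ} (D : Finset (Fin n)) (g : Fin n → Bool) :
    (Finset.univ.filter fun x : Fin n → Bool => ∀ k ∈ D, x k = g k).card
      = 2 ^ (n - D.card) := by
  rw [← Fintype.card_subtype]
  have e : {x : Fin n → Bool // ∀ k ∈ D, x k = g k} ≃ ({k : Fin n // k ∉ D} → Bool) :=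
    { toFun := fun x k => x.1 k.1
      invFun := fun f => ⟨fun k => if h : k ∈ D then g k else f ⟨k, h⟩, by
        intro k hk; simp [hk]⟩
      left_inv := by
        rintro ⟨x, hx⟩
        ext k
        by_cases h : k ∈ D
        · simp [h, hx k h]
        · simp [h]
      right_inv := by
        rintro f
        ext ⟨k, hk⟩
        simp [hk] }
  rw [Fintype.card_congr e]
  rw [Fintype.card_fun]
  congr 1
  simp [Fintype.card_subtype_compl, Fintype.card_coe]
open Finset in
lemma countLayer {n : ℕ} (D : Finset (Fin n)) (a : Fin n → Bool) (j : ℕ) :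
    (Finset.univ.filter fun x : Fin n → Bool =>
        (D.filter fun k => x k ≠ a k).card = j).card
      = D.card.choose j * 2 ^ (n - D.card) := by
  have key : (Finset.univ.filter fun x : Fin n → Bool =>
        (D.filter fun k => x k ≠ a k).card = j)
      = (D.powersetCard j).biUnion (fun S =>
          Finset.univ.filter fun x : Fin n → Bool =>
            ∀ k ∈ D, x k = (if k ∈ S then !(a k) else a k)) := by
    ext x
    simp only [mem_filter, mem_univ, true_and, mem_biUnion, mem_powersetCard]
    constructor
    · intro h
      refine ⟨D.filter fun k => x k ≠ a k, ⟨filter_subset _ _, h⟩, ?_⟩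
      intro k hk
      by_cases hx : x k = a k
      · simp [mem_filter, hx]
      · have hm : k ∈ D.filter fun k => x k ≠ a k := mem_filter.mpr ⟨hk, hx⟩
        rw [if_pos hm]
        cases hxk : x k <;> cases hak : a k <;> simp_all
    · rintro ⟨S, ⟨hS, hcard⟩, h⟩
      rw [← hcard]
      congr 1
      ext k
      simp only [mem_filter]
      constructor
      · rintro ⟨hkD, hne⟩
        have := h k hkD
        by_contra hkS
        simp [hkS] at this
        exact hne this
      · intro hkS
        have hkD := hS hkS
        have := h k hkD
        rw [if_pos hkS] at this
        exact ⟨hkD, by simp [this]⟩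
  rw [key, card_biUnion]
  · rw [Finset.sum_congr rfl (fun S _ => countFix D _)]
    rw [sum_const, smul_eq_mul, card_powersetCard]
  · intro S hS S' hS' hne
    simp only [mem_coe, mem_powersetCard] at hS hS'
    refine disjoint_left.mpr ?_
    intro x hx hx'
    simp only [mem_filter, mem_univ, true_and] at hx hx'
    apply hne
    ext k
    by_cases hkD : k ∈ D
    · have h1 := hx k hkD
      have h2 := hx' k hkD
      rw [h1] at h2
      by_cases hkS : k ∈ S <;> by_cases hkS' : k ∈ S' <;>
        simp [hkS, hkS'] at h2 ⊢
    · exact ⟨fun h => absurd (hS.1 h) hkD, fun h => absurd (hS'.1 h) hkD⟩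

open Finset in
lemma countLayerTie {n : ℕ} (D : Finset (Fin n)) (a : Fin n → Bool) (c : Fin n)
    (hc : c ∈ D) (j : ℕ) (hj : 1 ≤ j) :
    (Finset.univ.filter fun x : Fin n → Bool =>
        (D.filter fun k => x k ≠ a k).card = j ∧ x c ≠ a c).card
      = (D.card - 1).choose (j - 1) * 2 ^ (n - D.card) := by
  have key : (Finset.univ.filter fun x : Fin n → Bool =>
        (D.filter fun k => x k ≠ a k).card = j ∧ x c ≠ a c)
      = ((D.powersetCard j).filter fun S => c ∈ S).biUnion (fun S =>
          Finset.univ.filter fun x : Fin n → Bool =>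
            ∀ k ∈ D, x k = (if k ∈ S then !(a k) else a k)) := by
    ext x
    simp only [mem_filter, mem_univ, true_and, mem_biUnion, mem_powersetCard]
    constructor
    · rintro ⟨h, hcne⟩
      refine ⟨D.filter fun k => x k ≠ a k, ⟨⟨filter_subset _ _, h⟩, mem_filter.mpr ⟨hc, hcne⟩⟩, ?_⟩
      intro k hk
      by_cases hx : x k = a k
      · simp [mem_filter, hx]
      · have hm : k ∈ D.filter fun k => x k ≠ a k := mem_filter.mpr ⟨hk, hx⟩
        rw [if_pos hm]
        cases hxk : x k <;> cases hak : a k <;> simp_all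
    · rintro ⟨S, ⟨⟨hS, hcard⟩, hcS⟩, h⟩
      have hset : (D.filter fun k => x k ≠ a k) = S := by
        ext k
        simp only [mem_filter]
        constructor
        · rintro ⟨hkD, hne⟩
          have := h k hkD
          by_contra hkS
          simp [hkS] at this
          exact hne this
        · intro hkS
          have hkD := hS hkS
          have := h k hkD
          rw [if_pos hkS] at this
          exact ⟨hkD, by simp [this]⟩
      refine ⟨by rw [hset]; exact hcard, ?_⟩
      have := h c hc
      rw [if_pos hcS] at this
      simp [this]
  rw [key, card_biUnion]
  · rw [Finset.sum_congr rfl (fun S _ => countFix D _)]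
    rw [sum_const, smul_eq_mul]
    congr 1
    have : ((D.powersetCard j).filter fun S => c ∈ S).card
        = ((D.erase c).powersetCard (j - 1)).card := by
      apply Finset.card_bij (fun S _ => S.erase c)
      · intro S hS
        simp only [mem_filter, mem_powersetCard] at hS
        rw [mem_powersetCard]
        constructor
        · intro k hk
          exact mem_erase.mpr ⟨(mem_erase.mp hk).1, hS.1.1 (mem_erase.mp hk).2⟩
        · rw [card_erase_of_mem hS.2, hS.1.2]
      · intro S hS S' hS' hE
        simp only [mem_filter, mem_powersetCard] at hS hS'
        rw [← insert_erase hS.2, ← insert_erase hS'.2, hE]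
      · intro T hT
        rw [mem_powersetCard] at hT
        have hcT : c ∉ T := fun h => (mem_erase.mp (hT.1 h)).1 rfl
        refine ⟨insert c T, ?_, by rw [erase_insert hcT]⟩
        simp only [mem_filter, mem_powersetCard]
        refine ⟨⟨?_, ?_⟩, mem_insert_self _ _⟩
        · intro k hk
          rcases mem_insert.mp hk with h | h
          · exact h ▸ hc
          · exact (erase_subset _ _) (hT.1 h)
        · rw [card_insert_of_notMem hcT, hT.2]
          omega
    rw [this, card_powersetCard, card_erase_of_mem hc]
  · intro S hS S' hS' hne
    simp only [mem_coe, mem_filter, mem_powersetCard] at hS hS'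
    refine disjoint_left.mpr ?_
    intro x hx hx'
    simp only [mem_filter, mem_univ, true_and] at hx hx'
    apply hne
    ext k
    by_cases hkD : k ∈ D
    · have h1 := hx k hkD
      have h2 := hx' k hkD
      rw [h1] at h2
      by_cases hkS : k ∈ S <;> by_cases hkS' : k ∈ S' <;>
        simp [hkS, hkS'] at h2 ⊢
    · exact ⟨fun h => absurd (hS.1.1 h) hkD, fun h => absurd (hS'.1.1 h) hkD⟩

open Finset in
lemma cardT {n : ℕ} (D : Finset (Fin n)) (a : Fin n → Bool) (s : ℕ) (hs : 1 ≤ s)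
    (c : Fin n) (hc : c ∈ D) :
    (Finset.univ.filter fun x : Fin n → Bool =>
        2 * (D.filter fun k => x k ≠ a k).card < s
        ∨ (2 * (D.filter fun k => x k ≠ a k).card = s ∧ x c ≠ a c)).card
      = V D.card s * 2 ^ (n - D.card) := by
  rw [Finset.filter_or, Finset.card_union_of_disjoint]
  · have h1 : (Finset.univ.filter fun x : Fin n → Bool =>
        2 * (D.filter fun k => x k ≠ a k).card < s)
        = (Finset.range ((s + 1) / 2)).biUnion (fun j =>
            Finset.univ.filter fun x : Fin n → Bool =>
              (D.filter fun k => x k ≠ a k).card = j) := by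
      ext x
      simp only [mem_filter, mem_univ, true_and, mem_biUnion, mem_range]
      constructor
      · intro h
        exact ⟨_, by omega, rfl⟩
      · rintro ⟨j, hj, h⟩
        omega
    rw [h1, card_biUnion]
    · have hsum : ∑ j ∈ Finset.range ((s + 1) / 2),
          (Finset.univ.filter fun x : Fin n → Bool =>
            (D.filter fun k => x k ≠ a k).card = j).card
          = (∑ j ∈ Finset.range ((s + 1) / 2), D.card.choose j) * 2 ^ (n - D.card) := by
        rw [Finset.sum_mul]
        exact Finset.sum_congr rfl fun j _ => countLayer D a j
      rw [hsum]
      clear hsum h1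
      rcases Nat.even_or_odd s with he | ho
      · -- even case
        have hmod : s % 2 = 0 := Nat.even_iff.mp he
        have hQ : (Finset.univ.filter fun x : Fin n → Bool =>
            2 * (D.filter fun k => x k ≠ a k).card = s ∧ x c ≠ a c)
            = (Finset.univ.filter fun x : Fin n → Bool =>
              (D.filter fun k => x k ≠ a k).card = s / 2 ∧ x c ≠ a c) := by
          ext x
          simp only [Finset.mem_filter, Finset.mem_univ, true_and]
          constructor
          · rintro ⟨h, h2⟩
            refine ⟨?_, h2⟩
            omega
          · rintro ⟨h, h2⟩
            refine ⟨?_, h2⟩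
            omega
        rw [hQ, countLayerTie D a c hc (s / 2) (by omega)]
        have hV : V D.card s
            = (∑ j ∈ Finset.range (s / 2), D.card.choose j) + (D.card - 1).choose (s / 2 - 1) := by
          have : ¬ (s % 2 = 1) := by omega
          simp only [V, if_neg this]
        have hhalf : (s + 1) / 2 = s / 2 := by omega
        rw [hV, hhalf, add_mul]
      · -- odd case
        have hmod : s % 2 = 1 := Nat.odd_iff.mp ho
        have hQ : (Finset.univ.filter fun x : Fin n → Bool =>
            2 * (D.filter fun k => x k ≠ a k).card = s ∧ x c ≠ a c) = ∅ := by
          apply Finset.filter_false_of_mem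
          rintro x _ ⟨h, -⟩
          omega
        rw [hQ, Finset.card_empty, add_zero]
        have hV : V D.card s = ∑ j ∈ Finset.range ((s - 1) / 2 + 1), D.card.choose j := by
          simp only [V, if_pos hmod]
        have hhalf : (s + 1) / 2 = (s - 1) / 2 + 1 := by omega
        rw [hV, hhalf]
    · intro j hj j' hj' hne
      refine Finset.disjoint_left.mpr ?_
      intro x hx hx'
      simp only [mem_filter, mem_univ, true_and] at hx hx'
      exact hne (hx ▸ hx')
  · refine Finset.disjoint_left.mpr ?_
    intro x hx hx'
    simp only [mem_filter, mem_univ, true_and] at hx hx'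
    omega

lemma ham_id {n : ℕ} (x p q : Fin n → Bool) :
    hammingDist x p + hammingDist p q
      = hammingDist x q
        + 2 * ((Finset.univ.filter fun k => p k ≠ q k).filter fun k => x k ≠ p k).card := by
  simp only [hammingDist, Finset.filter_filter, Finset.card_filter]
  rw [← Finset.sum_add_distrib, Finset.mul_sum, ← Finset.sum_add_distrib]
  apply Finset.sum_congr rfl
  intro k _
  cases x k <;> cases p k <;> cases q k <;> simp

lemma tight {n : ℕ} (x p q : Fin n → Bool)
    (h : hammingDist x q = hammingDist x p + hammingDist p q) :
    ∀ k, x k ≠ p k → p k = q k := by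
  by_contra hcon
  push_neg at hcon
  obtain ⟨k0, hk1, hk2⟩ := hcon
  have hlt : hammingDist x q < hammingDist x p + hammingDist p q := by
    simp only [hammingDist, Finset.card_filter]
    rw [← Finset.sum_add_distrib]
    apply Finset.sum_lt_sum
    · intro k _
      cases x k <;> cases p k <;> cases q k <;> simp
    · refine ⟨k0, Finset.mem_univ _, ?_⟩
      revert hk1 hk2
      cases x k0 <;> cases p k0 <;> cases q k0 <;> simp
  omega

lemma bool3 : ∀ u v w : Bool, u ≠ v → u ≠ w → v = w := by decide

lemma endgame {n : ℕ} (x ai bi aj bj : Fin n → Bool) (ci cj : Fin n)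
    (hle : ci ≤ cj)
    (htiei : x ci ≠ ai ci) (htiej : x cj ≠ aj cj)
    (hciDi : ai ci ≠ bi ci)
    (hcjmin : ∀ k, aj k ≠ bj k → cj ≤ k)
    (tight1 : ∀ k, x k ≠ ai k → ai k = bj k)
    (tight2 : ∀ k, x k ≠ aj k → aj k = bi k) : False := by
  have h1 : ai ci = bj ci := tight1 ci htiei
  have hxbj : x ci ≠ bj ci := h1 ▸ htiei
  have hDj : aj ci ≠ bj ci := by
    intro heq
    have hxaj : x ci ≠ aj ci := by rw [heq]; exact hxbj
    have h2 : aj ci = bi ci := tight2 ci hxaj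
    have hxbi : x ci ≠ bi ci := by rw [← h2]; exact hxaj
    exact hciDi (bool3 _ _ _ htiei hxbi)
  have hceq : cj = ci := le_antisymm (hcjmin ci hDj) hle
  rw [hceq] at htiej
  exact hDj (bool3 _ _ _ htiej hxbj)

theorem stmt_8 (n t : ℕ) (ht : t < n)
    (m : ℕ) (a b : Fin m → (Fin n → Bool)) (s : Fin m → ℕ)
    (hs : ∀ i, 1 ≤ s i)
    (h1 : ∀ i, hammingDist (a i) (b i) = t + s i)
    (h2 : ∀ i j, i ≠ j →
      hammingDist (a i) (b j) + hammingDist (a j) (b i) ≤ 2 * t) :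
    ∑ i, (V (t + s i) (s i) : ℝ) / 2 ^ (t + s i) ≤ 1 := by
  classical
  have hDcard : ∀ i, (Finset.univ.filter fun k => a i k ≠ b i k).card = t + s i := by
    intro i
    rw [← h1 i]
    rfl
  have hDne : ∀ i, (Finset.univ.filter fun k => a i k ≠ b i k).Nonempty := by
    intro i
    rw [← Finset.card_pos, hDcard]
    have := hs i
    omega
  set c : Fin m → Fin n := fun i => (Finset.univ.filter fun k => a i k ≠ b i k).min' (hDne i)
    with hcdef
  set T : Fin m → Finset (Fin n → Bool) := fun i =>
    Finset.univ.filter fun x =>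
      2 * ((Finset.univ.filter fun k => a i k ≠ b i k).filter fun k => x k ≠ a i k).card < s i
      ∨ (2 * ((Finset.univ.filter fun k => a i k ≠ b i k).filter fun k => x k ≠ a i k).card = s i
          ∧ x (c i) ≠ a i (c i)) with hTdef
  have hcard : ∀ i, (T i).card = V (t + s i) (s i) * 2 ^ (n - (t + s i)) := by
    intro i
    rw [hTdef]
    rw [cardT _ _ _ (hs i) _ (Finset.min'_mem _ _), hDcard]
  have hN : ∀ i, t + s i ≤ n := by
    intro i
    rw [← h1 i]
    simpa using (hammingDist_le_card_fintype : hammingDist (a i) (b i) ≤ _)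
  have hdisj : ∀ i ∈ Finset.univ, ∀ j ∈ Finset.univ, i ≠ j → Disjoint (T i) (T j) := by
    intro i _ j _ hij
    rw [Finset.disjoint_left]
    intro x hxi hxj
    rw [hTdef] at hxi hxj
    simp only [Finset.mem_filter, Finset.mem_univ, true_and] at hxi hxj
    have idi := ham_id x (a i) (b i)
    have idj := ham_id x (a j) (b j)
    have tri1 := hammingDist_triangle x (a i) (b j)
    have tri2 := hammingDist_triangle x (a j) (b i)
    have h2ij := h2 i j hij
    rw [h1 i] at idi
    rw [h1 j] at idj
    have hciDi : a i (c i) ≠ b i (c i) := by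
      have := Finset.min'_mem (Finset.univ.filter fun k => a i k ≠ b i k) (hDne i)
      rw [Finset.mem_filter] at this
      exact this.2
    have hcjDj : a j (c j) ≠ b j (c j) := by
      have := Finset.min'_mem (Finset.univ.filter fun k => a j k ≠ b j k) (hDne j)
      rw [Finset.mem_filter] at this
      exact this.2
    have hmini : ∀ k, a i k ≠ b i k → c i ≤ k := by
      intro k hk
      rw [hcdef]
      exact Finset.min'_le (Finset.univ.filter fun k => a i k ≠ b i k) k
        (Finset.mem_filter.mpr ⟨Finset.mem_univ _, hk⟩)
    have hminj : ∀ k, a j k ≠ b j k → c j ≤ k := by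
      intro k hk
      rw [hcdef]
      exact Finset.min'_le (Finset.univ.filter fun k => a j k ≠ b j k) k
        (Finset.mem_filter.mpr ⟨Finset.mem_univ _, hk⟩)
    rcases hxi with hi | ⟨hieq, hitie⟩
    · rcases hxj with hj | ⟨hjeq, _⟩ <;> omega
    · rcases hxj with hj | ⟨hjeq, hjtie⟩
      · omega
      · have e1 : hammingDist x (b j) = hammingDist x (a i) + hammingDist (a i) (b j) := by
          omega
        have e2 : hammingDist x (b i) = hammingDist x (a j) + hammingDist (a j) (b i) := by
          omega
        have t1 := tight x (a i) (b j) e1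
        have t2 := tight x (a j) (b i) e2
        rcases le_total (c i) (c j) with hle | hle
        · exact endgame x (a i) (b i) (a j) (b j) (c i) (c j) hle hitie hjtie hciDi hminj t1 t2
        · exact endgame x (a j) (b j) (a i) (b i) (c j) (c i) hle hjtie hitie hcjDj hmini t2 t1
  have hsumcard : ∑ i, (T i).card ≤ 2 ^ n := by
    rw [← Finset.card_biUnion hdisj]
    refine le_trans (Finset.card_le_univ _) ?_
    rw [Fintype.card_fun, Fintype.card_bool, Fintype.card_fin]
  have key : ∀ i, (V (t + s i) (s i) : ℝ) / 2 ^ (t + s i) = ((T i).card : ℝ) / 2 ^ n := by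
    intro i
    rw [hcard i]
    have hpos1 : (0:ℝ) < 2 ^ (t + s i) := by positivity
    have hpos2 : (0:ℝ) < 2 ^ n := by positivity
    rw [div_eq_div_iff hpos1.ne' hpos2.ne']
    push_cast
    rw [mul_assoc, ← pow_add]
    congr 2
    have := hN i
    omega
  calc ∑ i, (V (t + s i) (s i) : ℝ) / 2 ^ (t + s i)
      = ∑ i, ((T i).card : ℝ) / 2 ^ n := Finset.sum_congr rfl fun i _ => key i
    _ = (∑ i, ((T i).card : ℝ)) / 2 ^ n := by rw [Finset.sum_div]
    _ ≤ (2 ^ n : ℝ) / 2 ^ n := by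
        apply div_le_div_of_nonneg_right ?_ (by positivity)
        exact_mod_cast hsumcard
    _ = 1 := div_self (by positivity)
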